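/- Let σ > 1, w₀ < 0, and let z(t) = 1 + (|w₀|/(λ_σ + μ_σ)) e^{−λ_σ t} − (|w₀|/(λ_σ + μ_σ)) e^{μ_σ t} for t ≥ 0 (the solution of z'' + z' + 2(σ − 1)(1 − z) = 0 with z(0) = 1, z'(0) = w₀). Then there exists a time T with 0 < T < (1/μ_σ) log(1 + (λ_σ + μ_σ)/(σ |w₀|)) such that z(T) = 1 − 1/σ and z(t) > 1 − 1/σ for all t ∈ [0, T). -/

import Mathlib

/-- `λ_σ = (1 + √(8σ − 7))/2`, the opposite of the negative root of `r² + r − 2(σ−1)`. -/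
noncomputable def lam (σ : ℝ) : ℝ := (1 + Real.sqrt (8*σ - 7)) / 2

/-- `μ_σ = (−1 + √(8σ − 7))/2`, the positive root of `r² + r − 2(σ−1)`. -/
noncomputable def mu (σ : ℝ) : ℝ := (-1 + Real.sqrt (8*σ - 7)) / 2

/-!
`z` is strictly decreasing, being a constant plus a decreasing and minus an increasing
exponential, and `z 0 = 1 > 1 - 1/σ`. At `T' = (1/μ) log (1 + (λ+μ)/(σ|w₀|))` the growing
term equals `c + 1/σ` (with `c = |w₀|/(λ+μ)`) while the decaying one is `< c`, so
`z T' < 1 - 1/σ`. The intermediate value theorem gives the crossing time `T ∈ (0, T')`, and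
monotonicity makes it the first one.
-/

open Real Set

theorem StrictAnti.exists_mem_Ioo_eq_and_lt_of_lt {f : ℝ → ℝ} (hf : StrictAnti f)
    (hcont : Continuous f) {a b y : ℝ} (hab : a ≤ b) (hy : y ∈ Ioo (f b) (f a)) :
    ∃ T ∈ Ioo a b, f T = y ∧ ∀ t ∈ Ico a T, y < f t := by
  obtain ⟨T, hT, hfT⟩ := intermediate_value_Ioo' hab hcont.continuousOn hy
  exact ⟨T, hT, hfT, fun t ht => hfT ▸ hf ht.2⟩

section ExpSubExp

variable {a b c d : ℝ}

theorem strictAnti_add_mul_exp_sub_mul_exp (ha : 0 ≤ a) (hb : 0 < b) (hc : 0 < c) :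
    StrictAnti fun t => d + c * exp (-a * t) - c * exp (b * t) := by
  intro s t hst
  have hdecay : exp (-a * t) ≤ exp (-a * s) := exp_le_exp.mpr (by nlinarith)
  have hgrowth : exp (b * s) < exp (b * t) := exp_lt_exp.mpr (by nlinarith)
  dsimp only
  nlinarith

theorem add_mul_exp_sub_mul_exp_lt {ε T : ℝ} (ha : 0 < a) (hc : 0 < c) (hT : 0 < T)
    (hgrowth : c * exp (b * T) = c + ε) :
    d + c * exp (-a * T) - c * exp (b * T) < d - ε := by
  have hdecay : exp (-a * T) < 1 := exp_lt_one_iff.mpr (by nlinarith)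
  nlinarith

theorem exists_first_hitting_time_add_mul_exp_sub_mul_exp {ε : ℝ} (ha : 0 < a) (hb : 0 < b)
    (hc : 0 < c) (hε : 0 < ε) :
    ∃ T : ℝ, 0 < T ∧ T < 1 / b * log (1 + ε / c) ∧
      d + c * exp (-a * T) - c * exp (b * T) = d - ε ∧
      ∀ t ∈ Ico (0 : ℝ) T, d - ε < d + c * exp (-a * t) - c * exp (b * t) := by
  set T' := 1 / b * log (1 + ε / c) with hT'
  have hT'pos : 0 < T' :=
    mul_pos (one_div_pos.mpr hb) (log_pos (by linarith [div_pos hε hc]))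
  have hgrowth : c * exp (b * T') = c + ε := by
    rw [hT', ← mul_assoc, mul_one_div_cancel hb.ne', one_mul, exp_log (by positivity)]
    field_simp
  have hstart : d - ε < d + c * exp (-a * 0) - c * exp (b * 0) := by simpa using hε
  obtain ⟨T, hT, hhit, hbefore⟩ :=
    (strictAnti_add_mul_exp_sub_mul_exp ha.le hb hc).exists_mem_Ioo_eq_and_lt_of_lt
      (by fun_prop) hT'pos.le ⟨add_mul_exp_sub_mul_exp_lt ha hc hT'pos hgrowth, hstart⟩
  exact ⟨T, hT.1, hT.2, hhit, hbefore⟩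

end ExpSubExp

theorem one_lt_sqrt_eight_mul_sub_seven {σ : ℝ} (hσ : 1 < σ) : 1 < √(8 * σ - 7) := by
  rw [lt_sqrt zero_le_one]
  linarith

theorem lam_pos {σ : ℝ} (hσ : 1 < σ) : 0 < lam σ := by
  have := one_lt_sqrt_eight_mul_sub_seven hσ
  unfold lam
  linarith

theorem mu_pos {σ : ℝ} (hσ : 1 < σ) : 0 < mu σ := by
  have := one_lt_sqrt_eight_mul_sub_seven hσ
  unfold mu
  linarith

/-- For the explicit solution
`z t = 1 + (|w₀|/(λ_σ + μ_σ)) e^{−λ_σ t} − (|w₀|/(λ_σ + μ_σ)) e^{μ_σ t}` (with `w₀ < 0`),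
there is a first time `T`, with `0 < T < (1/μ_σ) log (1 + (λ_σ + μ_σ)/(σ |w₀|))`, at
which `z` reaches the value `1 − 1/σ`, and `z t > 1 − 1/σ` for `t ∈ [0, T)`. -/
theorem exit_time_case_V (σ w₀ : ℝ) (hσ : 1 < σ) (hw₀ : w₀ < 0)
    (z : ℝ → ℝ)
    (hzdef : ∀ t : ℝ, z t = 1 + (|w₀| / (lam σ + mu σ)) * Real.exp (-(lam σ) * t)
        - (|w₀| / (lam σ + mu σ)) * Real.exp (mu σ * t)) :
    ∃ T : ℝ, 0 < T ∧
      T < (1 / mu σ) * Real.log (1 + (lam σ + mu σ) / (σ * |w₀|)) ∧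
      z T = 1 - 1/σ ∧
      ∀ t ∈ Set.Ico (0:ℝ) T, 1 - 1/σ < z t := by
  have hσ0 : 0 < σ := by linarith
  have hsum : 0 < lam σ + mu σ := add_pos (lam_pos hσ) (mu_pos hσ)
  have hc : 0 < |w₀| / (lam σ + mu σ) := div_pos (abs_pos.mpr hw₀.ne) hsum
  have hratio : 1 / σ / (|w₀| / (lam σ + mu σ)) = (lam σ + mu σ) / (σ * |w₀|) := by
    field_simp
  obtain ⟨T, hT0, hTlt, hhit, hbefore⟩ := exists_first_hitting_time_add_mul_exp_sub_mul_exp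
    (d := 1) (lam_pos hσ) (mu_pos hσ) hc (one_div_pos.mpr hσ0)
  rw [hratio] at hTlt
  exact ⟨T, hT0, hTlt, (hzdef T).trans hhit, fun t ht => (hzdef t).symm ▸ hbefore t ht⟩
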